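/- Let s_1 > s_2 with s_1 > 0 and σ(x) = (e^{s_1 x}, e^{s_2 x}). Then for x ≥ 0, |σ'_1(x) σ''_2(x) − σ'_2(x) σ''_1(x)| / ‖σ'(x)‖² ≤ C e^{−(s_1 − s_2)x} for some constant C > 0 depending only on s_1, s_2. -/

import Mathlib

/-! Since `σᵢ' = sᵢ e^{sᵢx}` and `σᵢ'' = sᵢ² e^{sᵢx}`, the numerator
is `s₁ s₂ (s₂ - s₁) e^{(s₁+s₂)x}`, while the denominator is at least
`s₁² e^{2s₁x}`; their quotient is a constant times `e^{-(s₁-s₂)x}`. -/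

open Real

lemma hasDerivAt_exp_const_mul (s x : ℝ) :
    HasDerivAt (fun x => exp (s * x)) (s * exp (s * x)) x := by
  simpa [mul_comm] using ((hasDerivAt_id x).const_mul s).exp

lemma deriv_exp_const_mul (s : ℝ) :
    deriv (fun x => exp (s * x)) = fun x => s * exp (s * x) :=
  funext fun x => (hasDerivAt_exp_const_mul s x).deriv

lemma deriv_deriv_exp_const_mul (s : ℝ) :
    deriv (deriv fun x => exp (s * x)) = fun x => s ^ 2 * exp (s * x) := by
  funext x
  rw [deriv_exp_const_mul, ((hasDerivAt_exp_const_mul s x).const_mul s).deriv, sq, mul_assoc]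

lemma exp_const_mul_wronskian (s₁ s₂ x : ℝ) :
    s₁ * exp (s₁ * x) * (s₂ ^ 2 * exp (s₂ * x)) - s₂ * exp (s₂ * x) * (s₁ ^ 2 * exp (s₁ * x))
      = s₁ * s₂ * (s₂ - s₁) * exp ((s₁ + s₂) * x) := by
  rw [add_mul, exp_add]
  ring

lemma abs_exp_const_mul_wronskian_div_le {s₁ : ℝ} (hs₁ : s₁ ≠ 0) (s₂ x : ℝ) :
    |s₁ * s₂ * (s₂ - s₁) * exp ((s₁ + s₂) * x)|
        / ((s₁ * exp (s₁ * x)) ^ 2 + (s₂ * exp (s₂ * x)) ^ 2)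
      ≤ |s₂ * (s₁ - s₂) / s₁| * exp (-(s₁ - s₂) * x) := by
  have hnum : |s₁ * s₂ * (s₂ - s₁) * exp ((s₁ + s₂) * x)|
      = |s₂ * (s₁ - s₂) / s₁| * exp (-(s₁ - s₂) * x) * (s₁ * exp (s₁ * x)) ^ 2 := by
    have hexp : exp ((s₁ + s₂) * x) = exp (-(s₁ - s₂) * x) * exp (s₁ * x) ^ 2 := by
      rw [sq, ← exp_add, ← exp_add]
      ring_nf
    have hcoef : s₁ * s₂ * (s₂ - s₁) = -(s₁ * (s₂ * (s₁ - s₂))) := by ring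
    rw [hexp, hcoef, abs_mul, abs_neg, abs_mul,
      abs_of_pos (by positivity : 0 < exp (-(s₁ - s₂) * x) * exp (s₁ * x) ^ 2), abs_div,
      mul_pow, ← sq_abs s₁]
    field_simp
  refine div_le_of_le_mul₀ (by positivity) (by positivity) ?_
  rw [hnum]
  gcongr
  exact le_add_of_nonneg_right (sq_nonneg _)

theorem stmt7_general (s₁ s₂ : ℝ) (h1 : 0 < s₁)
    (σ₁ σ₂ : ℝ → ℝ)
    (hσ₁ : ∀ x, σ₁ x = Real.exp (s₁ * x))
    (hσ₂ : ∀ x, σ₂ x = Real.exp (s₂ * x)) :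
    ∃ C > (0:ℝ), ∀ x ≥ (0:ℝ),
      |deriv σ₁ x * deriv (deriv σ₂) x - deriv σ₂ x * deriv (deriv σ₁) x|
        / ((deriv σ₁ x) ^ 2 + (deriv σ₂ x) ^ 2)
      ≤ C * Real.exp (-(s₁ - s₂) * x) := by
  obtain rfl : σ₁ = fun x => exp (s₁ * x) := funext hσ₁
  obtain rfl : σ₂ = fun x => exp (s₂ * x) := funext hσ₂
  refine ⟨|s₂ * (s₁ - s₂) / s₁| + 1, by positivity, fun x _ => ?_⟩
  rw [deriv_deriv_exp_const_mul, deriv_deriv_exp_const_mul, deriv_exp_const_mul,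
    deriv_exp_const_mul, exp_const_mul_wronskian]
  refine (abs_exp_const_mul_wronskian_div_le h1.ne' s₂ x).trans ?_
  gcongr
  exact le_add_of_nonneg_right zero_le_one

theorem stmt7 (s₁ s₂ : ℝ) (h12 : s₂ < s₁) (h1 : 0 < s₁)
    (σ₁ σ₂ : ℝ → ℝ)
    (hσ₁ : ∀ x, σ₁ x = Real.exp (s₁ * x))
    (hσ₂ : ∀ x, σ₂ x = Real.exp (s₂ * x)) :
    ∃ C > (0:ℝ), ∀ x ≥ (0:ℝ),
      |deriv σ₁ x * deriv (deriv σ₂) x - deriv σ₂ x * deriv (deriv σ₁) x|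
        / ((deriv σ₁ x) ^ 2 + (deriv σ₂ x) ^ 2)
      ≤ C * Real.exp (-(s₁ - s₂) * x) :=
  stmt7_general s₁ s₂ h1 σ₁ σ₂ hσ₁ hσ₂
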